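/- arXiv:1905.01936 — 4 statements merged into one kernel-verified Lean document; each statement's English description precedes it below -/
import Mathlib

section
/- Let V be a ℤ-module with a symmetric ℤ-valued bilinear form B (write (x.y) for B(x,y)), let h ∈ V satisfy (h.h) = 3, assume the orthogonal complement of h is even (for every x ∈ V with (h.x) = 0 the integer (x.x) is even), and let M be a ℤ-submodule of V with h ∈ M on which B is positive definite ((x.x) > 0 for every nonzero x ∈ M). Then the following three conditions are equivalent: (i) there is no r ∈ M with (r.r) = 2 and (h.r) = 0, and no s ∈ M with (s.s) = 1 and (h.s) = ±1 (i.e. M contains no rank-two sublattice through h with Gram matrix K₆ = [[3,0],[0,2]] or K₂ = [[3,1],[1,1]]); (ii) there is no r ∈ M with (r.r) = 2 (M does not represent 2); (iii) for every nonzero x ∈ M, (x.x) ≥ 3. -/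
/-- Lemma 2.5 (key observation): for a positive definite sublattice `M` containing `h`
with `(h.h) = 3` inside a lattice whose orthogonal complement of `h` is even, the three
conditions (i), (ii), (iii) are equivalent. -/
theorem stmt_0 (V : Type*) [AddCommGroup V] [Module ℤ V]
    (B : V →ₗ[ℤ] V →ₗ[ℤ] ℤ) (hsymm : ∀ x y : V, B x y = B y x)
    (h : V) (hh : B h h = 3)
    (heven : ∀ x : V, B h x = 0 → Even (B x x))
    (M : Submodule ℤ V) (hM : h ∈ M)
    (hpos : ∀ x ∈ M, x ≠ 0 → 0 < B x x) :
    ((¬ (∃ r ∈ M, B r r = 2 ∧ B h r = 0) ∧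
      ¬ (∃ s ∈ M, B s s = 1 ∧ (B h s = 1 ∨ B h s = -1))) ↔
        ¬ (∃ r ∈ M, B r r = 2)) ∧
    ((¬ (∃ r ∈ M, B r r = 2)) ↔ ∀ x ∈ M, x ≠ 0 → 3 ≤ B x x) := by
  -- helper lemmas for the intrinsic ℤ-smul
  have smul2 : ∀ (n : ℤ) (x y : V), B x (n • y) = n * B x y := by
    intro n x y; rw [map_zsmul, smul_eq_mul]
  have smul1 : ∀ (n : ℤ) (x y : V), B (n • x) y = n * B x y := by
    intro n x y; rw [hsymm, smul2, hsymm]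
  have add1 : ∀ x y z : V, B (x + y) z = B x z + B y z := by
    intro x y z; rw [hsymm, map_add, hsymm z x, hsymm z y]
  have zmem : ∀ (n : ℤ) (v : V), v ∈ M → n • v ∈ M := by
    intro n v hv
    exact M.toAddSubgroup.zsmul_mem hv n
  have hnonneg : ∀ x ∈ M, 0 ≤ B x x := by
    intro x hx
    by_cases hx0 : x = 0
    · simp [hx0]
    · exact le_of_lt (hpos x hx hx0)
  constructor
  · constructor
    · -- (i) → (ii)
      rintro ⟨P1, P2⟩ ⟨r, hrM, hr2⟩
      set a := B h r with ha
      set x : V := (3 : ℤ) • r + (-a) • h with hxdef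
      have hxM : x ∈ M := Submodule.add_mem _ (zmem _ _ hrM) (zmem _ _ hM)
      have hE : B x x = 18 - 3 * (a * a) := by
        rw [hxdef]
        simp only [map_add, LinearMap.add_apply, smul1, smul2]
        rw [hr2, hsymm r h, hh, ← ha]; ring
      have hperp : B h x = 0 := by
        rw [hxdef]
        simp only [map_add, smul2]
        rw [hh, ← ha]; ring
      obtain ⟨c, hc⟩ := heven x hperp
      rw [hE] at hc
      have hEa : Even a := by
        rcases Int.even_or_odd a with h' | ⟨k, hk⟩
        · exact h'
        · exfalso
          rw [hk] at hc
          obtain ⟨t, ht⟩ : ∃ t : ℤ, 12 * t + 12 * k + 2 * c = 15 :=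
            ⟨k * k, by linear_combination -hc⟩
          omega
      have hge : 0 ≤ 18 - 3 * (a * a) := by rw [← hE]; exact hnonneg x hxM
      have hb1 : a ≤ 2 := by nlinarith
      have hb2 : -2 ≤ a := by nlinarith
      obtain ⟨m, hm⟩ := hEa
      have hcase : a = -2 ∨ a = 0 ∨ a = 2 := by omega
      rcases hcase with h0 | h0 | h0
      · -- a = -2 : take s = h + r
        refine P2 ⟨h + r, Submodule.add_mem _ hM hrM, ?_, Or.inl ?_⟩
        · simp only [map_add, LinearMap.add_apply]
          rw [hsymm r h, hh, hr2, ← ha, h0]; ring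
        · simp only [map_add]
          rw [hh, ← ha, h0]; ring
      · -- a = 0 : r itself violates (i) part 1
        exact P1 ⟨r, hrM, hr2, by rw [← ha, h0]⟩
      · -- a = 2 : take s = h - r
        refine P2 ⟨h - r, Submodule.sub_mem _ hM hrM, ?_, Or.inl ?_⟩
        · simp only [map_sub, LinearMap.sub_apply]
          rw [hsymm r h, hh, hr2, ← ha, h0]; ring
        · simp only [map_sub]
          rw [hh, ← ha, h0]; ring
    · -- (ii) → (i)
      intro Q
      constructor
      · rintro ⟨r, hrM, hr2, _⟩
        exact Q ⟨r, hrM, hr2⟩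
      · rintro ⟨s, hsM, hs1, hε⟩
        rcases hε with h1 | h1
        · refine Q ⟨h - s, Submodule.sub_mem _ hM hsM, ?_⟩
          simp only [map_sub, LinearMap.sub_apply]
          rw [hsymm s h, hh, hs1, h1]; ring
        · refine Q ⟨h + s, Submodule.add_mem _ hM hsM, ?_⟩
          simp only [map_add, LinearMap.add_apply]
          rw [hsymm s h, hh, hs1, h1]; ring
  · constructor
    · -- (ii) → (iii)
      intro Q x hxM hx0
      have hp := hpos x hxM hx0
      by_contra hlt
      push_neg at hlt
      have hval : B x x = 1 ∨ B x x = 2 := by omega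
      rcases hval with hx1 | hx2
      · -- (x.x) = 1 : build a vector of square 2
        set a := B h x with ha
        set y : V := (3 : ℤ) • x + (-a) • h with hydef
        have hyM : y ∈ M := Submodule.add_mem _ (zmem _ _ hxM) (zmem _ _ hM)
        have hE : B y y = 9 - 3 * (a * a) := by
          rw [hydef]
          simp only [map_add, LinearMap.add_apply, smul1, smul2]
          rw [hx1, hsymm x h, hh, ← ha]; ring
        have hperp : B h y = 0 := by
          rw [hydef]
          simp only [map_add, smul2]
          rw [hh, ← ha]; ring
        obtain ⟨c, hc⟩ := heven y hperp
        rw [hE] at hc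
        have hOa : Odd a := by
          rcases Int.even_or_odd a with ⟨k, hk⟩ | h'
          · exfalso
            rw [hk] at hc
            obtain ⟨t, ht⟩ : ∃ t : ℤ, 12 * t + 2 * c = 9 :=
              ⟨k * k, by linear_combination -hc⟩
            omega
          · exact h'
        have hge : 0 ≤ 9 - 3 * (a * a) := by rw [← hE]; exact hnonneg y hyM
        have hb1 : a ≤ 1 := by nlinarith
        have hb2 : -1 ≤ a := by nlinarith
        obtain ⟨k, hk⟩ := hOa
        have haa : a * a = 1 := by
          have : a = 1 ∨ a = -1 := by omega
          rcases this with h' | h' <;> rw [h'] <;> ring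
        refine Q ⟨h + (-a) • x, Submodule.add_mem _ hM (zmem _ _ hxM), ?_⟩
        simp only [map_add, LinearMap.add_apply, smul1, smul2]
        rw [hsymm x h, hh, hx1, ← ha]
        linear_combination -haa
      · exact Q ⟨x, hxM, hx2⟩
    · -- (iii) → (ii)
      rintro R ⟨r, hrM, hr2⟩
      have hr0 : r ≠ 0 := by
        rintro rfl
        simp at hr2
      have := R r hrM hr0
      omega
end

section
/- Let V be a ℤ-module with a symmetric ℤ-valued bilinear form B (write (x.y) for B(x,y)), let h ∈ V satisfy (h.h) = 3, assume that for every x ∈ V with (h.x) = 0 the integer (x.x) is even, and let M be a ℤ-submodule of V with h ∈ M on which B is positive definite. If r ∈ M satisfies (r.r) = 2, then (h.r) ∈ {−2, 0, 2}. -/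
/-!
Write `a = (h.r)`. Cauchy–Schwarz on the positive definite lattice `M` gives
`a² ≤ (h.h)(r.r) = 6`. The vector `a h - 3 r` is orthogonal to `h` and has square `3 (6 - a²)`,
which must be even; hence `a` is even, and `a ∈ {-2, 0, 2}`.
-/

namespace LinearMap.BilinForm

open LinearMap (BilinForm)

theorem apply_sq_le_of_pos_on_submodule {R V : Type*} [CommRing R] [LinearOrder R]
    [IsStrictOrderedRing R] [AddCommGroup V] [Module R V] (B : BilinForm R V)
    (hsymm : ∀ x y : V, B x y = B y x) (M : Submodule R V)
    (hpos : ∀ x ∈ M, x ≠ 0 → 0 < B x x) {x y : V} (hx : x ∈ M) (hy : y ∈ M) :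
    B x y ^ 2 ≤ B x x * B y y := by
  have hnonneg : ∀ z : M, 0 ≤ B.restrict M z z := fun z => by
    rcases eq_or_ne z 0 with rfl | hz
    · simp
    · exact (hpos z z.2 (by simpa using hz)).le
  have hcs := (B.restrict M).apply_mul_apply_le_of_forall_zero_le hnonneg ⟨x, hx⟩ ⟨y, hy⟩
  simpa [sq, hsymm y x] using hcs

theorem even_apply_of_odd_apply_self {V : Type*} [AddCommGroup V] [Module ℤ V]
    (B : BilinForm ℤ V) (hsymm : ∀ x y : V, B x y = B y x) {h : V} (hh : Odd (B h h))
    (heven : ∀ x : V, B h x = 0 → Even (B x x)) {r : V} (hr : Even (B r r)) :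
    Even (B h r) := by
  set x := B h r • h - B h h • r
  have horth : B h x = 0 := by
    simp only [x, map_sub, map_zsmul, smul_eq_mul]
    ring
  have hxx : B x x = B h h * (B h h * B r r - B h r ^ 2) := by
    simp only [x, map_sub, map_zsmul, LinearMap.sub_apply, LinearMap.smul_apply, smul_eq_mul,
      hsymm r h]
    ring
  have hsq := heven x horth
  rw [hxx, Int.even_mul, Int.even_sub, Int.even_mul, Int.even_pow] at hsq
  exact ((hsq.resolve_left (Int.not_even_iff_odd.mpr hh)).mp (Or.inr hr)).1

end LinearMap.BilinForm

/-- Key step in the proof of Lemma 2.5: if `(r.r) = 2` for some `r` in the positive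
definite sublattice `M ∋ h` with `(h.h) = 3` and even orthogonal complement of `h`,
then `(h.r) ∈ {-2, 0, 2}`. -/
theorem stmt_1 (V : Type*) [AddCommGroup V] [Module ℤ V]
    (B : V →ₗ[ℤ] V →ₗ[ℤ] ℤ) (hsymm : ∀ x y : V, B x y = B y x)
    (h : V) (hh : B h h = 3)
    (heven : ∀ x : V, B h x = 0 → Even (B x x))
    (M : Submodule ℤ V) (hM : h ∈ M)
    (hpos : ∀ x ∈ M, x ≠ 0 → 0 < B x x)
    (r : V) (hr : r ∈ M) (hrr : B r r = 2) :
    B h r = -2 ∨ B h r = 0 ∨ B h r = 2 := by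
  have hcs := LinearMap.BilinForm.apply_sq_le_of_pos_on_submodule B hsymm M hpos hM hr
  rw [hh, hrr] at hcs
  obtain ⟨k, hk⟩ := LinearMap.BilinForm.even_apply_of_odd_apply_self B hsymm
    (hh ▸ by decide) heven (hrr ▸ even_two)
  rw [hk] at hcs ⊢
  have hk_bounds : -1 ≤ k ∧ k ≤ 1 := by constructor <;> nlinarith
  omega
end

section
/- Let V be a ℤ-module with a symmetric ℤ-valued bilinear form B (write (x.y) for B(x,y)), let h ∈ V satisfy (h.h) = 3, assume that for every x ∈ V with (h.x) = 0 the integer (x.x) is even, and let M be a ℤ-submodule of V with h ∈ M on which B is positive definite. If there exists s ∈ M with (s.s) = 1, then there exists r ∈ M with (r.r) = 2. -/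
lemma smul_left' {V : Type*} [AddCommGroup V] [Module ℤ V]
    (B : V →ₗ[ℤ] V →ₗ[ℤ] ℤ) (c : ℤ) (x y : V) : B (c • x) y = c * B x y := by
  rw [← Int.cast_smul_eq_zsmul ℤ c x, Int.cast_id, B.map_smul, LinearMap.smul_apply,
    smul_eq_mul]

lemma smul_right' {V : Type*} [AddCommGroup V] [Module ℤ V]
    (B : V →ₗ[ℤ] V →ₗ[ℤ] ℤ) (c : ℤ) (x y : V) : B x (c • y) = c * B x y := by
  rw [← Int.cast_smul_eq_zsmul ℤ c y, Int.cast_id, (B x).map_smul, smul_eq_mul]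

lemma aux_bilin' {V : Type*} [AddCommGroup V] [Module ℤ V]
    (B : V →ₗ[ℤ] V →ₗ[ℤ] ℤ) (c d : ℤ) (x y : V) :
    B (c • x - d • y) (c • x - d • y) =
      c * c * B x x - c * d * B x y - d * c * B y x + d * d * B y y := by
  simp only [map_sub, LinearMap.sub_apply, smul_left', smul_right']
  ring

/-- Step (ii) ⇒ (iii) in the proof of Lemma 2.5: if the positive definite sublattice
`M ∋ h` (with `(h.h) = 3` and even orthogonal complement of `h`) contains a vector of
square 1, then it contains a vector of square 2. -/
theorem stmt_2 (V : Type*) [AddCommGroup V] [Module ℤ V]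
    (B : V →ₗ[ℤ] V →ₗ[ℤ] ℤ) (hsymm : ∀ x y : V, B x y = B y x)
    (h : V) (hh : B h h = 3)
    (heven : ∀ x : V, B h x = 0 → Even (B x x))
    (M : Submodule ℤ V) (hM : h ∈ M)
    (hpos : ∀ x ∈ M, x ≠ 0 → 0 < B x x)
    (hs : ∃ s ∈ M, B s s = 1) :
    ∃ r ∈ M, B r r = 2 := by
  obtain ⟨s, hsM, hss⟩ := hs
  obtain ⟨a, ha⟩ : ∃ a : ℤ, B h s = a := ⟨_, rfl⟩
  have hsh : B s h = a := by rw [hsymm s h, ha]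
  -- x = 3 • s - a • h is orthogonal to h, hence has even square
  have hx0 : B h ((3 : ℤ) • s - a • h) = 0 := by
    rw [map_sub, smul_right', smul_right', ha, hh]; ring
  have hxeven := heven _ hx0
  rw [aux_bilin' B 3 a s h, hss, hh, hsh, ha] at hxeven
  have hxeven' : Even (9 - 3 * a ^ 2) := by
    convert hxeven using 1; ring
  have haodd : Odd a := by
    rcases Int.even_or_odd a with he | ho
    · exfalso
      obtain ⟨k, hk⟩ := he
      obtain ⟨m, hm⟩ := hxeven'
      obtain ⟨t, ht⟩ : ∃ t : ℤ, k * k = t := ⟨_, rfl⟩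
      have : a ^ 2 = 4 * t := by rw [hk, ← ht]; ring
      omega
    · exact ho
  -- r = h - a • s ∈ M
  have hrM : h - a • s ∈ M := by
    rw [← Int.cast_smul_eq_zsmul ℤ a s]
    exact M.sub_mem hM (M.smul_mem _ hsM)
  have hrval : B (h - a • s) (h - a • s) = 3 - a ^ 2 := by
    have e := aux_bilin' B 1 a h s
    rw [one_zsmul] at e
    rw [e, hh, hss, hsh, ha]; ring
  have hne : h - a • s ≠ 0 := by
    intro h0
    have heq : h = a • s := sub_eq_zero.mp h0
    have h3 : (3 : ℤ) = a * (a * 1) := by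
      rw [heq, smul_left', smul_right', hss] at hh
      linarith [hh]
    obtain ⟨k, hk⟩ := haodd
    obtain ⟨t, ht⟩ : ∃ t : ℤ, k * k = t := ⟨_, rfl⟩
    have : a * (a * 1) = 4 * t + 4 * k + 1 := by rw [hk, ← ht]; ring
    omega
  have hpos' := hpos _ hrM hne
  rw [hrval] at hpos'
  have ha1 : a ^ 2 = 1 := by
    obtain ⟨k, hk⟩ := haodd
    obtain ⟨t, ht⟩ : ∃ t : ℤ, k * k = t := ⟨_, rfl⟩
    have h1 : a ^ 2 = 4 * t + 4 * k + 1 := by rw [hk, ← ht]; ring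
    have h2 : 0 ≤ t := ht ▸ mul_self_nonneg k
    have h3 : 0 ≤ t + k := by nlinarith [sq_nonneg (2 * k + 1)]
    omega
  exact ⟨h - a • s, hrM, by rw [hrval, ha1]; ring⟩
end

section
/- Let n₁ ≥ 1 and n₂ ≥ 1 be integers and let A be the 3×3 integer matrix [[3,1,1],[1,2n₁+1,0],[1,0,2n₂+1]]. Then for every vector v = (x,y,z) ∈ ℤ³ with v ≠ 0, the value vᵀ A v equals x² + 2n₁y² + 2n₂z² + (x+y)² + (x+z)² and satisfies vᵀ A v ≥ 3. -/
open Matrix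

/-- Norm lower bound in Case (3) of Theorem 3.1: for the Gram matrix
`A = [[3,1,1],[1,2n₁+1,0],[1,0,2n₂+1]]` with `n₁, n₂ ≥ 1`, every nonzero
`v = (x,y,z) ∈ ℤ³` satisfies `vᵀAv = x² + 2n₁y² + 2n₂z² + (x+y)² + (x+z)² ≥ 3`. -/
theorem stmt_5 (n₁ n₂ : ℤ) (hn₁ : 1 ≤ n₁) (hn₂ : 1 ≤ n₂)
    (v : Fin 3 → ℤ) (hv : v ≠ 0) :
    v ⬝ᵥ (!![3, 1, 1; 1, 2 * n₁ + 1, 0; 1, 0, 2 * n₂ + 1]).mulVec v =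
      (v 0) ^ 2 + 2 * n₁ * (v 1) ^ 2 + 2 * n₂ * (v 2) ^ 2 +
        (v 0 + v 1) ^ 2 + (v 0 + v 2) ^ 2 ∧
    3 ≤ v ⬝ᵥ (!![3, 1, 1; 1, 2 * n₁ + 1, 0; 1, 0, 2 * n₂ + 1]).mulVec v := by
  set x := v 0 with hxd
  set y := v 1 with hyd
  set z := v 2 with hzd
  have heq : v ⬝ᵥ (!![3, 1, 1; 1, 2 * n₁ + 1, 0; 1, 0, 2 * n₂ + 1]).mulVec v =
      x ^ 2 + 2 * n₁ * y ^ 2 + 2 * n₂ * z ^ 2 + (x + y) ^ 2 + (x + z) ^ 2 := by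
    simp [dotProduct, mulVec, Fin.sum_univ_three, Matrix.cons_val_zero,
      Matrix.cons_val_one, Matrix.head_cons, Matrix.vecHead, Matrix.vecTail]
    ring
  refine ⟨heq, heq ▸ ?_⟩
  have sq : ∀ a : ℤ, a ≠ 0 → 1 ≤ a ^ 2 := by
    intro a ha
    have := Int.one_le_abs (by omega : a ≠ 0)
    nlinarith [sq_abs a]
  have hn₁' : (0:ℤ) ≤ 2 * n₁ * y ^ 2 := by positivity
  have hn₂' : (0:ℤ) ≤ 2 * n₂ * z ^ 2 := by positivity
  have h₁ : (2:ℤ) * y ^ 2 ≤ 2 * n₁ * y ^ 2 := by nlinarith [sq_nonneg y]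
  have h₂ : (2:ℤ) * z ^ 2 ≤ 2 * n₂ * z ^ 2 := by nlinarith [sq_nonneg z]
  rcases eq_or_ne x 0 with hx | hx
  · rcases eq_or_ne y 0 with hy | hy
    · rcases eq_or_ne z 0 with hz | hz
      · exfalso
        apply hv
        funext i
        fin_cases i
        · exact hx
        · exact hy
        · exact hz
      · nlinarith [sq z hz, sq_nonneg (x + y), sq_nonneg (x + z)]
    · nlinarith [sq y hy, sq_nonneg (x + y), sq_nonneg (x + z)]
  · rcases eq_or_ne y 0 with hy | hy
    · rcases eq_or_ne z 0 with hz | hz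
      · rw [hy, hz]; nlinarith [sq x hx]
      · nlinarith [sq x hx, sq z hz, sq_nonneg (x + y), sq_nonneg (x + z)]
    · nlinarith [sq x hx, sq y hy, sq_nonneg (x + y), sq_nonneg (x + z)]
end
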